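/- arXiv:2308.08840 — 7 statements merged into one kernel-verified Lean document; each statement's English description precedes it below -/
import Mathlib

section
/- Let N be a norm on ℝⁿ and let M ⊂ ℝⁿ be an infinite unbounded set. Then there exists a function φ : ℝⁿ → ℕ such that for every N-isometric copy M' of M and every i ∈ ℕ there is a point z ∈ M' with φ(z) = i. -/
/-- `N` is a norm on ℝⁿ. -/
def IsNormOn (n : ℕ) (N : (Fin n → ℝ) → ℝ) : Prop :=
  (∀ x, N x = 0 ↔ x = 0) ∧ (∀ (a : ℝ) (x), N (a • x) = |a| * N x) ∧
  (∀ x y, N (x + y) ≤ N x + N y)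

/-- `M'` is an `N`-isometric copy of `M`: there is a bijection from `M` onto `M'`
preserving `N`-distances. -/
def IsometricCopyOn (n : ℕ) (N : (Fin n → ℝ) → ℝ) (M M' : Set (Fin n → ℝ)) : Prop :=
  ∃ f : (Fin n → ℝ) → (Fin n → ℝ), Set.BijOn f M M' ∧
    ∀ x ∈ M, ∀ y ∈ M, N (f x - f y) = N (x - y)

/-- For a norm `N` on ℝⁿ and an infinite unbounded `M ⊆ ℝⁿ` (contained in no ball of
finite radius), there is a polychromatic ℕ-colouring: a function `φ : ℝⁿ → ℕ` such that
every `N`-isometric copy of `M` contains a point of every colour. -/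
theorem polychromatic_colouring_unbounded (n : ℕ) (N : (Fin n → ℝ) → ℝ)
    (hN : IsNormOn n N) (M : Set (Fin n → ℝ)) (hMinf : M.Infinite)
    (hMunb : ¬ ∃ (x₀ : Fin n → ℝ) (R : ℝ), ∀ x ∈ M, N (x - x₀) ≤ R) :
    ∃ φ : (Fin n → ℝ) → ℕ,
      ∀ M' : Set (Fin n → ℝ), IsometricCopyOn n N M M' →
        ∀ i : ℕ, ∃ z ∈ M', φ z = i := by
  classical
  obtain ⟨hN0, hNsmul, hNtri⟩ := hN
  -- N is symmetric
  have hNneg : ∀ x, N (-x) = N x := by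
    intro x
    have := hNsmul (-1) x
    simpa [neg_one_smul] using this
  have hsub : ∀ a b, N (a - b) ≤ N a + N b := by
    intro a b
    have := hNtri a (-b)
    simpa [sub_eq_add_neg, hNneg] using this
  have hlow : ∀ a b, N a ≤ N (a - b) + N b := by
    intro a b
    have := hNtri (a - b) b
    simpa using this
  -- unboundedness
  push_neg at hMunb
  have hub : ∀ R : ℝ, ∃ x ∈ M, R < N x := by
    intro R
    obtain ⟨x, hxM, hx⟩ := hMunb 0 R
    exact ⟨x, hxM, by simpa using hx⟩
  choose F hFM hFgt using hub
  obtain ⟨x₀, hx₀⟩ := hMinf.nonempty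
  -- sequence of points with rapidly growing norms
  set u : ℕ → (Fin n → ℝ) := fun k => Nat.rec x₀ (fun k xp => F (N xp + 2 * k + 3)) k with hu
  have huM : ∀ k, u k ∈ M := by
    intro k
    induction k with
    | zero => exact hx₀
    | succ k ih => exact hFM _
  have hugt : ∀ k : ℕ, N (u k) + 2 * k + 3 < N (u (k + 1)) := by
    intro k
    exact hFgt (N (u k) + 2 * k + 3)
  -- separation of the annuli
  have hsep : ∀ k j : ℕ, j < k → N (u j) + j < N (u k) - k := by
    intro k
    induction k with
    | zero => intro j h; omega
    | succ k ih =>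
      intro j hj
      have hk := hugt k
      push_cast
      rcases Nat.lt_succ_iff_lt_or_eq.mp hj with h | h
      · have := ih j h
        have hkpos : (0 : ℝ) ≤ (k : ℝ) := Nat.cast_nonneg k
        linarith
      · subst h; linarith
  -- the colouring
  refine ⟨fun z => if h : ∃ k, |N z - N (u k)| ≤ (k : ℝ) then (Nat.unpair (Nat.find h)).1
    else 0, ?_⟩
  rintro M' ⟨f, hbij, hiso⟩ i
  set c : ℝ := N (f x₀) + N x₀ with hc
  set k : ℕ := Nat.pair i ⌈c⌉₊ with hkdef
  have hck : c ≤ (k : ℝ) := by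
    calc c ≤ (⌈c⌉₊ : ℝ) := Nat.le_ceil c
    _ ≤ (k : ℝ) := by exact_mod_cast Nat.right_le_pair i ⌈c⌉₊
  set z : Fin n → ℝ := f (u k) with hz
  have hzM' : z ∈ M' := hbij.mapsTo (huM k)
  -- norm distortion bound
  have hdist : |N z - N (u k)| ≤ c := by
    have h1 : N (z - f x₀) = N (u k - x₀) := hiso (u k) (huM k) x₀ hx₀
    have h2 : N z ≤ N (z - f x₀) + N (f x₀) := hlow z (f x₀)
    have h3 : N (u k - x₀) ≤ N (u k) + N x₀ := hsub (u k) x₀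
    have h4 : N (u k) ≤ N (u k - x₀) + N x₀ := hlow (u k) x₀
    have h5 : N (z - f x₀) ≤ N z + N (f x₀) := hsub z (f x₀)
    rw [abs_sub_le_iff]
    constructor <;> [skip; skip] <;> simp only [hc] <;> linarith
  have hex : ∃ m, |N z - N (u m)| ≤ (m : ℝ) := ⟨k, hdist.trans hck⟩
  refine ⟨z, hzM', ?_⟩
  beta_reduce
  rw [dif_pos hex]
  have hfind : Nat.find hex = k := by
    have hle : Nat.find hex ≤ k := Nat.find_le (hdist.trans hck)
    rcases lt_or_eq_of_le hle with hlt | heq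
    · exfalso
      have hj := Nat.find_spec hex
      set j := Nat.find hex
      have hsepjk := hsep k j hlt
      have h1 : N z ≤ N (u j) + (j : ℝ) := by
        have := abs_sub_le_iff.mp hj
        linarith [this.1]
      have h2 : N (u k) - (k : ℝ) ≤ N z := by
        have hdk : |N z - N (u k)| ≤ (k : ℝ) := hdist.trans hck
        have := abs_sub_le_iff.mp hdk
        linarith [this.2]
      linarith
    · exact heq
  rw [hfind, hkdef, Nat.unpair_pair]
end

section
/- Let k be a positive integer and let H = (V, E) be a hypergraph such that every edge e ∈ E is infinite and any two distinct edges e₁, e₂ ∈ E satisfy |e₁ ∩ e₂| < k (the intersection is finite of cardinality less than k). Then H admits a polychromatic ℕ-colouring. -/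
/-!
Shrinking every edge to a countably infinite subset keeps the intersections below `k`. A family
of countable sets with intersections below `k` is essentially disjoint: deleting a finite part of
each member makes the members pairwise disjoint. When the family is countable, delete from each
set what it shares with the finitely many sets enumerated before it. Otherwise, well-order the
family `E` in order type `#E` and cover it by an increasing chain of subfamilies of size `< #E`,
each saturated (an edge outside meets the subfamily's union in fewer than `k` vertices); by
induction on the cardinality each layer of the chain is essentially disjoint, and an edge meets
the earlier layers only finitely often. The disjoint infinite remainders are then enumerated by
`ℕ`, which gives the colouring.
-/

open Set Cardinal

theorem Set.encard_iUnion_lt_of_directed {α ι : Type*} [Nonempty ι] {f : ι → Set α}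
    (hf : Directed (· ⊆ ·) f) {k : ℕ} (h : ∀ i, (f i).encard < k) :
    (⋃ i, f i).encard < k := by
  by_contra! hk
  obtain ⟨t, ht, htk⟩ := exists_subset_encard_eq hk
  have hfin := finite_of_encard_eq_coe htk
  obtain ⟨i, hi⟩ := hf.exists_mem_subset_of_finset_subset_biUnion (s := hfin.toFinset)
    (by rwa [hfin.coe_toFinset])
  rw [hfin.coe_toFinset] at hi
  exact (h i).not_ge (htk ▸ encard_le_encard hi)

theorem Cardinal.mk_sUnion_le_of_countable {α : Type*} {G : Set (Set α)} {κ : Cardinal}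
    (hκ : ℵ₀ ≤ κ) (hG : #G ≤ κ) (hcnt : ∀ g ∈ G, g.Countable) : #(⋃₀ G) ≤ κ :=
  (mk_sUnion_le G).trans <| mul_le_of_le hκ hG <|
    ciSup_le' fun g => (mk_le_aleph0_iff.2 (hcnt g g.2).to_subtype).trans hκ

theorem Cardinal.mk_iUnion_nat_le {α : Type*} {f : ℕ → Set α} {κ : Cardinal}
    (hκ : ℵ₀ ≤ κ) (hf : ∀ n, #(f n) ≤ κ) : #(⋃ n, f n) ≤ κ := by
  have := mk_iUnion_le_lift f
  simp only [lift_uzero, mk_nat, lift_aleph0] at this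
  exact this.trans (mul_le_of_le hκ hκ (ciSup_le' hf))

section

variable {V : Type*}

section Saturation

variable (k : ℕ) (E : Set (Set V))

def saturationStep (G : Set (Set V)) : Set (Set V) :=
  G ∪ {e ∈ E | k ≤ (e ∩ ⋃₀ G).encard}

def saturation (F : Set (Set V)) : Set (Set V) := ⋃ n, (saturationStep k E)^[n] F

def IsSaturated (G : Set (Set V)) : Prop := ∀ e ∈ E, e ∉ G → (e ∩ ⋃₀ G).encard < k

variable {k E}

theorem saturationStep_mono : Monotone (saturationStep k E) := fun _ _ h =>
  union_subset_union h fun _ he => ⟨he.1, he.2.trans (encard_le_encard <|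
    inter_subset_inter_right _ (sUnion_mono h))⟩

theorem saturationStep_subset {G : Set (Set V)} (hG : G ⊆ E) : saturationStep k E G ⊆ E :=
  union_subset hG fun _ he => he.1

theorem iterate_saturationStep_subset {F : Set (Set V)} (hF : F ⊆ E) (n : ℕ) :
    (saturationStep k E)^[n] F ⊆ E := by
  induction n with
  | zero => exact hF
  | succ n ih => rw [Function.iterate_succ_apply']; exact saturationStep_subset ih

theorem monotone_iterate_saturationStep (F : Set (Set V)) :
    Monotone fun n => (saturationStep k E)^[n] F :=
  monotone_nat_of_le_succ fun n => by
    rw [Function.iterate_succ_apply']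
    exact subset_union_left

theorem saturation_mono : Monotone (saturation k E) := fun _ _ h =>
  iUnion_mono fun n => saturationStep_mono.iterate n h

theorem subset_saturation (F : Set (Set V)) : F ⊆ saturation k E F :=
  subset_iUnion_of_subset 0 subset_rfl

theorem encard_inter_sUnion_iUnion_lt {ι : Type*} [Nonempty ι] {G : ι → Set (Set V)}
    (hdir : Directed (· ⊆ ·) G) {e : Set V} (h : ∀ i, (e ∩ ⋃₀ G i).encard < k) :
    (e ∩ ⋃₀ ⋃ i, G i).encard < k := by
  rw [sUnion_iUnion, inter_iUnion]
  exact encard_iUnion_lt_of_directed (hdir.mono_comp (g := fun G => e ∩ ⋃₀ G) _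
    fun _ _ h => inter_subset_inter_right _ (sUnion_mono h)) h

theorem isSaturated_saturation (F : Set (Set V)) : IsSaturated k E (saturation k E F) := by
  refine fun e he hnot => encard_inter_sUnion_iUnion_lt
    (monotone_iterate_saturationStep F).directed_le fun n => ?_
  by_contra! hn
  refine hnot (mem_iUnion.2 ⟨n + 1, ?_⟩)
  rw [Function.iterate_succ_apply']
  exact Or.inr ⟨he, hn⟩

theorem mk_saturationStep_le (hint : E.Pairwise fun e f => (e ∩ f).encard < k)
    {G : Set (Set V)} (hcnt : ∀ g ∈ G, g.Countable) {κ : Cardinal} (hκ : ℵ₀ ≤ κ)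
    (hG : #G ≤ κ) : #(saturationStep k E G) ≤ κ := by
  set D := {e ∈ E | k ≤ (e ∩ ⋃₀ G).encard}
  have hD : ∀ e : D, ∃ t ⊆ e.1 ∩ ⋃₀ G, t.encard = k := fun e =>
    exists_subset_encard_eq e.2.2
  choose t ht htk using hD
  -- two edges share fewer than `k` vertices, so distinct new edges have distinct witnesses `t`
  have ht_inj : Function.Injective fun e : D =>
      (⟨t e, (ht e).trans inter_subset_right, by simp [← toENat_le_natCast, htk]⟩ :
        {s : Set V // s ⊆ ⋃₀ G ∧ #s ≤ k}) := by
    intro e f hef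
    by_contra hne
    have htef : t e = t f := congrArg Subtype.val hef
    have hsub : t e ⊆ e.1 ∩ f.1 := fun v hv => ⟨(ht e hv).1, (ht f (htef ▸ hv)).1⟩
    exact (hint e.2.1 f.2.1 (Subtype.coe_ne_coe.2 hne)).not_ge (htk e ▸ encard_le_encard hsub)
  have hU : max #(⋃₀ G) ℵ₀ ≤ κ := max_le (mk_sUnion_le_of_countable hκ hG hcnt) hκ
  calc #(saturationStep k E G) ≤ #G + #D := mk_union_le _ _
    _ ≤ κ := add_le_of_le hκ hG <| (mk_le_of_injective ht_inj).trans <|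
      (mk_bounded_subset_le _ _).trans <| (power_le_power_right hU).trans (power_nat_le hκ)

theorem mk_saturation_le (hcnt : ∀ e ∈ E, e.Countable)
    (hint : E.Pairwise fun e f => (e ∩ f).encard < k) {F : Set (Set V)} (hF : F ⊆ E)
    {κ : Cardinal} (hκ : ℵ₀ ≤ κ) (hFκ : #F ≤ κ) : #(saturation k E F) ≤ κ := by
  refine mk_iUnion_nat_le hκ fun n => ?_
  induction n with
  | zero => exact hFκ
  | succ n ih =>
    rw [Function.iterate_succ_apply']
    exact mk_saturationStep_le hint (fun g hg => hcnt g (iterate_saturationStep_subset hF n hg))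
      hκ ih

theorem IsSaturated.iUnion {ι : Type*} (hk : 0 < k) {G : ι → Set (Set V)}
    (hdir : Directed (· ⊆ ·) G) (hG : ∀ i, IsSaturated k E (G i)) :
    IsSaturated k E (⋃ i, G i) := by
  intro e he hnot
  rcases isEmpty_or_nonempty ι with hι | hι
  · simpa using hk
  exact encard_inter_sUnion_iUnion_lt hdir fun i =>
    hG i e he fun h => hnot (mem_iUnion_of_mem i h)

end Saturation

def EssentiallyDisjoint (E : Set (Set V)) : Prop :=
  ∃ A : Set V → Set V, (∀ e ∈ E, A e ⊆ e ∧ (e \ A e).Finite) ∧ E.PairwiseDisjoint A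

theorem Set.Subsingleton.essentiallyDisjoint {E : Set (Set V)} (hE : E.Subsingleton) :
    EssentiallyDisjoint E :=
  ⟨id, fun e _ => ⟨subset_rfl, by simp⟩, hE.pairwise _⟩

theorem EssentiallyDisjoint.mono {E F : Set (Set V)} (hE : EssentiallyDisjoint E)
    (hFE : F ⊆ E) : EssentiallyDisjoint F :=
  let ⟨A, hA, hAdisj⟩ := hE
  ⟨A, fun e he => hA e (hFE he), hAdisj.subset hFE⟩

theorem EssentiallyDisjoint.of_rank {E : Set (Set V)} {ι : Type*} [LinearOrder ι]
    (rk : Set V → ι) (hlayer : ∀ i, EssentiallyDisjoint {e ∈ E | rk e = i})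
    (htrace : ∀ e ∈ E, (e ∩ ⋃₀ {f ∈ E | rk f < rk e}).Finite) :
    EssentiallyDisjoint E := by
  choose A hA hAdisj using hlayer
  set B : Set V → Set V := fun e => A (rk e) e \ ⋃₀ {f ∈ E | rk f < rk e}
  have hBA : ∀ e, B e ⊆ A (rk e) e := fun e => sdiff_subset
  have hB : ∀ e ∈ E, B e ⊆ e := fun e he => (hBA e).trans (hA _ e ⟨he, rfl⟩).1
  have hB_lt : ∀ e ∈ E, ∀ f ∈ E, rk e < rk f → Disjoint (B e) (B f) :=
    fun e he f hf hlt => disjoint_sdiff_right.mono_left <| (hB e he).trans <|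
      subset_sUnion_of_mem (show e ∈ {g ∈ E | rk g < rk f} from ⟨he, hlt⟩)
  refine ⟨B, fun e he => ⟨hB e he, ?_⟩, fun e he f hf hef => ?_⟩
  · rw [Set.sdiff_sdiff_right]
    exact (hA _ e ⟨he, rfl⟩).2.union (htrace e he)
  rcases lt_trichotomy (rk e) (rk f) with hlt | heq | hgt
  · exact hB_lt e he f hf hlt
  · exact (hAdisj (rk f) ⟨he, heq⟩ ⟨hf, rfl⟩ hef).mono (heq ▸ hBA e) (hBA f)
  · exact (hB_lt f hf e he hgt).symm

theorem essentiallyDisjoint_of_countable {E : Set (Set V)} (hE : E.Countable)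
    (hfin : E.Pairwise fun e f => (e ∩ f).Finite) : EssentiallyDisjoint E := by
  obtain ⟨rk, hrk⟩ := countable_iff_exists_injOn.1 hE
  refine .of_rank rk (fun n => Subsingleton.essentiallyDisjoint fun e he f hf =>
    hrk he.1 hf.1 (he.2.trans hf.2.symm)) fun e he => ?_
  have hprev : {f ∈ E | rk f < rk e}.Finite :=
    ((finite_Iio (rk e)).subset (image_subset_iff.2 fun _ hf => hf.2)).of_finite_image
      (hrk.mono fun _ hf => hf.1)
  rw [sUnion_eq_biUnion, inter_iUnion₂]
  exact hprev.biUnion fun f hf => hfin he hf.1 (ne_of_apply_ne rk hf.2.ne')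

theorem EssentiallyDisjoint.of_saturated_chain {k : ℕ} (hk : 0 < k) {E : Set (Set V)}
    {ι : Type*} [LinearOrder ι] [WellFoundedLT ι] {C : ι → Set (Set V)} (hmono : Monotone C)
    (hsat : ∀ i, IsSaturated k E (C i)) (hcov : E ⊆ ⋃ i, C i)
    (hC : ∀ i, EssentiallyDisjoint (E ∩ C i)) : EssentiallyDisjoint E := by
  classical
  rcases isEmpty_or_nonempty ι with hι | ⟨⟨i₀⟩⟩
  · exact Subsingleton.essentiallyDisjoint fun e he => by simpa using hcov he
  let rk : Set V → ι := fun e =>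
    if h : ∃ i, e ∈ C i then wellFounded_lt.min {i | e ∈ C i} h else i₀
  have hrk : ∀ e ∈ E, e ∈ C (rk e) ∧ ∀ j < rk e, e ∉ C j := by
    intro e he
    have h : ∃ i, e ∈ C i := mem_iUnion.1 (hcov he)
    simp only [rk, dif_pos h]
    exact ⟨wellFounded_lt.min_mem _ h, fun j hj hmem =>
      wellFounded_lt.not_lt_min {i | e ∈ C i} hmem hj⟩
  refine .of_rank rk (fun i => (hC i).mono fun e he => ⟨he.1, he.2 ▸ (hrk e he.1).1⟩)
    fun e he => ?_
  have hprev : IsSaturated k E (⋃ j : Iio (rk e), C j) :=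
    .iUnion hk (hmono.comp (Subtype.mono_coe _)).directed_le fun j => hsat j
  have hnot : e ∉ ⋃ j : Iio (rk e), C j := by
    simpa using fun j hj => (hrk e he).2 j hj
  refine (finite_of_encard_le_coe (hprev e he hnot).le).subset
    (inter_subset_inter_right _ (sUnion_mono fun f hf => ?_))
  exact mem_iUnion.2 ⟨⟨rk f, hf.2⟩, (hrk f hf.1).1⟩

theorem essentiallyDisjoint_of_forall_lt_card {k : ℕ} (hk : 0 < k) {E : Set (Set V)}
    (hcnt : ∀ e ∈ E, e.Countable) (hint : E.Pairwise fun e f => (e ∩ f).encard < k)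
    (hE : ℵ₀ < #E) (ih : ∀ F ⊆ E, #F < #E → EssentiallyDisjoint F) :
    EssentiallyDisjoint E := by
  let ι := (#E).ord.ToType
  obtain ⟨enum⟩ : Nonempty (ι ≃ E) := Cardinal.eq.1 (mk_ord_toType _)
  let C : ι → Set (Set V) := fun i => saturation k E (Subtype.val ∘ enum '' Iic i)
  have hC_card : ∀ i, #(C i) < #E := by
    intro i
    have hIio : #(Iio i) < #E := by
      have := mk_Iio_lt i (by rw [mk_ord_toType, Ordinal.type_toType])
      rwa [show #ι = #E from mk_ord_toType _] at this
    have hIic : #(Iic i) < #E := by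
      rw [← Iio_insert]
      exact mk_insert_le.trans_lt (add_lt_of_lt hE.le hIio (one_lt_aleph0.trans hE))
    refine (mk_saturation_le hcnt hint ?_ (le_max_right _ ℵ₀) (le_max_left _ _)).trans_lt
      (max_lt (mk_image_le.trans_lt hIic) hE)
    rintro _ ⟨j, -, rfl⟩
    exact (enum j).2
  refine .of_saturated_chain hk
    (fun i j hij => saturation_mono (image_mono (Iic_subset_Iic.2 hij)))
    (fun i => isSaturated_saturation _) (fun e he => mem_iUnion.2 ⟨enum.symm ⟨e, he⟩, ?_⟩)
    fun i => ih _ inter_subset_left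
      ((mk_le_mk_of_subset inter_subset_right).trans_lt (hC_card i))
  exact subset_saturation _ ⟨enum.symm ⟨e, he⟩, mem_Iic.2 le_rfl, by simp⟩

theorem essentiallyDisjoint_of_encard_inter_lt {k : ℕ} (hk : 0 < k) {E : Set (Set V)}
    (hcnt : ∀ e ∈ E, e.Countable) (hint : E.Pairwise fun e f => (e ∩ f).encard < k) :
    EssentiallyDisjoint E := by
  induction hc : #E using WellFoundedLT.induction generalizing E with
  | ind c ih =>
    rcases le_or_gt #E ℵ₀ with hE | hE
    · exact essentiallyDisjoint_of_countable (mk_le_aleph0_iff.1 hE)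
        (hint.mono' fun e f h => finite_of_encard_le_coe h.le)
    · refine essentiallyDisjoint_of_forall_lt_card hk hcnt hint hE fun F hF hlt => ?_
      exact ih _ (hc ▸ hlt) (fun e he => hcnt e (hF he)) (hint.mono hF) rfl

theorem exists_pairwiseDisjoint_infinite_subset {k : ℕ} (hk : 0 < k) {E : Set (Set V)}
    (hinf : ∀ e ∈ E, e.Infinite) (hint : E.Pairwise fun e f => (e ∩ f).encard < k) :
    ∃ B : Set V → Set V, (∀ e ∈ E, B e ⊆ e ∧ (B e).Infinite) ∧ E.PairwiseDisjoint B := by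
  have hc : ∀ e ∈ E, ∃ c ⊆ e, c.Countable ∧ c.Infinite := fun e he =>
    ⟨range fun n => ((hinf e he).natEmbedding _ n : V),
      by rintro _ ⟨n, rfl⟩; exact Subtype.prop _, countable_range _,
      infinite_range_of_injective <|
        Subtype.val_injective.comp ((hinf e he).natEmbedding _).injective⟩
  choose! c hce hcnt hcinf using hc
  have hc_inj : InjOn c E := by
    intro e he f hf hef
    by_contra hne
    refine hcinf e he (finite_of_encard_le_coe (hint he hf hne).le |>.subset ?_)
    exact subset_inter (hce e he) (hef ▸ hce f hf)
  have hint' : (c '' E).Pairwise fun e f => (e ∩ f).encard < k := by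
    rintro _ ⟨e, he, rfl⟩ _ ⟨f, hf, rfl⟩ hne
    exact (encard_le_encard (inter_subset_inter (hce e he) (hce f hf))).trans_lt
      (hint he hf fun h => hne (h ▸ rfl))
  obtain ⟨A, hA, hAdisj⟩ := essentiallyDisjoint_of_encard_inter_lt hk
    (forall_mem_image.2 hcnt) hint'
  refine ⟨A ∘ c, fun e he => ⟨?_, ?_⟩, hc_inj.pairwiseDisjoint_image.1 hAdisj⟩
  · exact (hA _ (mem_image_of_mem c he)).1.trans (hce e he)
  · refine ((hcinf e he).sdiff (hA _ (mem_image_of_mem c he)).2).mono ?_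
    rw [Set.sdiff_sdiff_right_self]
    exact inter_subset_right

theorem exists_polychromatic_of_pairwiseDisjoint {E : Set (Set V)} {B : Set V → Set V}
    (hB : ∀ e ∈ E, B e ⊆ e ∧ (B e).Infinite) (hdisj : E.PairwiseDisjoint B) :
    ∃ φ : V → ℕ, ∀ e ∈ E, ∀ i : ℕ, ∃ v ∈ e, φ v = i := by
  classical
  have hg : ∀ e : E, ∃ g : ℕ → V, (∀ n, g n ∈ B e) ∧ g.Injective := fun e =>
    ⟨fun n => ((hB e e.2).2.natEmbedding _ n : V), fun n => Subtype.prop _,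
      Subtype.val_injective.comp ((hB e e.2).2.natEmbedding _).injective⟩
  choose g hgB hginj using hg
  -- a vertex lies in at most one `B e`, and gets its index in the enumeration `g e` as colour
  refine ⟨fun v => if h : ∃ p : E × ℕ, g p.1 p.2 = v then h.choose.2 else 0,
    fun e he i => ⟨g ⟨e, he⟩ i, (hB e he).1 (hgB ⟨e, he⟩ i), ?_⟩⟩
  have h : ∃ p : E × ℕ, g p.1 p.2 = g ⟨e, he⟩ i := ⟨(⟨e, he⟩, i), rfl⟩
  have hp := h.choose_spec
  have hpe : h.choose.1 = ⟨e, he⟩ := Subtype.ext <|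
    hdisj.elim h.choose.1.2 he (not_disjoint_iff.2 ⟨_, hgB _ _, hp ▸ hgB _ i⟩)
  simp only [dif_pos h]
  exact hginj _ (hpe ▸ hp)

end

/-- Erdős–Hajnal: if every edge of a hypergraph is infinite and any two distinct edges
share fewer than `k` vertices, then the hypergraph admits a polychromatic ℕ-colouring. -/
theorem erdos_hajnal_polychromatic {V : Type*} (k : ℕ) (hk : 0 < k)
    (E : Set (Set V))
    (hinf : ∀ e ∈ E, e.Infinite)
    (hint : ∀ e₁ ∈ E, ∀ e₂ ∈ E, e₁ ≠ e₂ →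
      (e₁ ∩ e₂).Finite ∧ (e₁ ∩ e₂).ncard < k) :
    ∃ φ : V → ℕ, ∀ e ∈ E, ∀ i : ℕ, ∃ v ∈ e, φ v = i := by
  have hint' : E.Pairwise fun e f => (e ∩ f).encard < k := fun e he f hf hne => by
    obtain ⟨hfin, hcard⟩ := hint e he f hf hne
    rw [← hfin.cast_ncard_eq]
    exact_mod_cast hcard
  obtain ⟨B, hB, hdisj⟩ := exists_pairwiseDisjoint_infinite_subset hk hinf hint'
  exact exists_polychromatic_of_pairwiseDisjoint hB hdisj
end

section
/- Let N be a norm on ℝⁿ and let M ⊂ ℝⁿ be an infinite bounded set. Then there exists an infinite subset M' ⊆ M such that all the distances ‖x − x'‖_N over unordered pairs of distinct points x, x' ∈ M' are pairwise distinct; that is, for x, x', y, y' ∈ M' with x ≠ x' and y ≠ y', the equality ‖x − x'‖_N = ‖y − y'‖_N implies {x, x'} = {y, y'}. -/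
/-!
Fix an accumulation point `p` of `M` and choose points `y₀, y₁, …` of `M` one at a time, keeping
`{p, y₀, …, yₖ}` a set with distinct distances. A new point `y` very close to `p` sees each old
point `x` at distance close to `dist p x`, so by continuity the only coincidence it can create is
`dist y x = dist p x`: `y` has to avoid the spheres through `p` centred at the old points. This
remains possible at every stage because, for suitable `y` arbitrarily close to `p`, the point `p`
is still an accumulation point of what is left after removing the sphere through `p` centred at
`y`. Otherwise, for `x` near `p` and `z` much nearer to `p` with `dist z x = dist p x`, the unit
vectors in the directions `x - p` and `z - p` would always be at distance at least `1`,
contradicting the compactness of the unit sphere.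
-/

open Filter Metric Set Topology Bornology

section MetricSpace

variable {X : Type*} [MetricSpace X]

def HasDistinctDistances (S : Set X) : Prop :=
  ∀ x ∈ S, ∀ x' ∈ S, ∀ y ∈ S, ∀ y' ∈ S, x ≠ x' → y ≠ y' →
    dist x x' = dist y y' → ({x, x'} : Set X) = {y, y'}

namespace HasDistinctDistances

variable {S : Set X}

lemma mono {T : Set X} (h : HasDistinctDistances T) (hST : S ⊆ T) : HasDistinctDistances S :=
  fun x hx x' hx' y hy y' hy' => h x (hST hx) x' (hST hx') y (hST hy) y' (hST hy')

lemma dist_ne_dist {p x x' : X} (h : HasDistinctDistances S) (hp : p ∈ S) (hx : x ∈ S)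
    (hx' : x' ∈ S) (hxx' : x ≠ x') : dist p x ≠ dist p x' := by
  intro heq
  rcases eq_or_ne x p with rfl | hxp
  · rw [dist_self, eq_comm, dist_eq_zero] at heq
    exact hxx' heq
  rcases eq_or_ne x' p with rfl | hx'p
  · rw [dist_self, dist_eq_zero] at heq
    exact hxp heq.symm
  rcases pair_eq_pair_iff.1 (h p hp x hx p hp x' hx' hxp.symm hx'p.symm heq) with
    ⟨-, rfl⟩ | ⟨-, rfl⟩
  exacts [hxx' rfl, hxp rfl]

lemma insert_of_dist_ne {y : X} (h : HasDistinctDistances S)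
    (hnew : ∀ x ∈ S, ∀ a ∈ S, ∀ b ∈ S, a ≠ b → dist y x ≠ dist a b)
    (hbis : ∀ x ∈ S, ∀ x' ∈ S, x ≠ x' → dist y x ≠ dist y x') :
    HasDistinctDistances (insert y S) := by
  have shape : ∀ a ∈ insert y S, ∀ b ∈ insert y S, a ≠ b →
      (a ∈ S ∧ b ∈ S) ∨ ∃ e ∈ S, ({a, b} : Set X) = {y, e} ∧ dist a b = dist y e := by
    rintro a (rfl | ha) b (rfl | hb) hab
    · exact absurd rfl hab
    · exact .inr ⟨b, hb, rfl, rfl⟩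
    · exact .inr ⟨a, ha, pair_comm _ _, dist_comm _ _⟩
    · exact .inl ⟨ha, hb⟩
  intro x hx x' hx' z hz w hw hxx' hzw heq
  rcases shape x hx x' hx' hxx' with ⟨hx, hx'⟩ | ⟨e, he, hxe, hde⟩ <;>
    rcases shape z hz w hw hzw with ⟨hz, hw⟩ | ⟨e', he', hze, hde'⟩
  · exact h x hx x' hx' z hz w hw hxx' hzw heq
  · exact absurd (heq.trans hde').symm (hnew e' he' x hx x' hx' hxx')
  · exact absurd (hde.symm.trans heq) (hnew e he z hz w hw hzw)
  · obtain rfl : e = e' := of_not_not fun hee =>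
      hbis e he e' he' hee (hde.symm.trans (heq.trans hde'))
    rw [hxe, hze]

lemma eventually_insert {p : X} (hS : S.Finite) (hp : p ∈ S) (h : HasDistinctDistances S) :
    ∀ᶠ y in 𝓝 p, (∀ x ∈ S, dist y x ≠ dist p x) → HasDistinctDistances (insert y S) := by
  have hcont : ∀ x : X, ContinuousAt (dist · x) p :=
    fun x => (continuous_id.dist continuous_const).continuousAt
  have hnew : ∀ᶠ y in 𝓝 p, ∀ x ∈ S, ∀ a ∈ S, ∀ b ∈ S,
      dist p x ≠ dist a b → dist y x ≠ dist a b := by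
    refine (eventually_all_finite hS).2 fun x _ => (eventually_all_finite hS).2 fun a _ =>
      (eventually_all_finite hS).2 fun b _ => ?_
    exact eventually_imp_distrib_left.2 fun hpx => (hcont x).eventually_ne hpx
  have hbis : ∀ᶠ y in 𝓝 p, ∀ x ∈ S, ∀ x' ∈ S, x ≠ x' → dist y x ≠ dist y x' := by
    refine (eventually_all_finite hS).2 fun x hx => (eventually_all_finite hS).2 fun x' hx' => ?_
    exact eventually_imp_distrib_left.2 fun hxx' =>
      ((hcont x).ne_iff_eventually_ne (hcont x')).1 (h.dist_ne_dist hp hx hx' hxx')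
  filter_upwards [hnew, hbis] with y hnew hbis hsph
  refine h.insert_of_dist_ne (fun x hx a ha b hb _ => ?_) hbis
  by_cases hpx : dist p x = dist a b
  · exact hpx ▸ hsph x hx
  · exact hnew x hx a ha b hb hpx

end HasDistinctDistances

lemma hasDistinctDistances_iUnion {ι : Type*} [SemilatticeSup ι] {u : ι → Set X}
    (hu : Monotone u) (h : ∀ i, HasDistinctDistances (u i)) :
    HasDistinctDistances (⋃ i, u i) := by
  intro x hx x' hx' y hy y' hy'
  obtain ⟨i, hx⟩ := mem_iUnion.1 hx
  obtain ⟨i', hx'⟩ := mem_iUnion.1 hx'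
  obtain ⟨j, hy⟩ := mem_iUnion.1 hy
  obtain ⟨j', hy'⟩ := mem_iUnion.1 hy'
  exact h (i ⊔ i' ⊔ (j ⊔ j')) x (hu (le_sup_left.trans le_sup_left) hx)
    x' (hu (le_sup_right.trans le_sup_left) hx') y (hu (le_sup_left.trans le_sup_right) hy)
    y' (hu (le_sup_right.trans le_sup_right) hy')

def DistinctDistanceSeed (p : X) (M : Set X) (s : Finset X) : Prop :=
  ↑s ⊆ M ∧ HasDistinctDistances (insert p (s : Set X)) ∧
    AccPt p (𝓟 {z ∈ M | ∀ x ∈ s, dist z x ≠ dist p x})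

end MetricSpace

theorem Finset.exists_monotone_of_forall_exists_insert {α : Type*} [DecidableEq α]
    {P : Finset α → Prop} (h₀ : P ∅) (h : ∀ s, P s → ∃ y ∉ s, P (insert y s)) :
    ∃ u : ℕ → Finset α, Monotone u ∧ (∀ t, P (u t)) ∧ (⋃ t, (u t : Set α)).Infinite := by
  obtain ⟨y₀, -⟩ := h ∅ h₀
  have : Nonempty α := ⟨y₀⟩
  choose! g hgs hgP using h
  let u : ℕ → Finset α := fun t => (fun s => insert (g s) s)^[t] ∅
  have hsucc : ∀ t, u (t + 1) = insert (g (u t)) (u t) :=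
    fun t => Function.iterate_succ_apply' _ _ _
  have hP : ∀ t, P (u t) := by
    intro t
    induction t with
    | zero => exact h₀
    | succ t ih => rw [hsucc]; exact hgP _ ih
  have hcard : ∀ t, (u t).card = t := by
    intro t
    induction t with
    | zero => rfl
    | succ t ih => rw [hsucc, Finset.card_insert_of_notMem (hgs _ (hP t)), ih]
  refine ⟨u, monotone_nat_of_le_succ fun t => hsucc t ▸ Finset.subset_insert _ _, hP,
    fun hfin => ?_⟩
  have hsub : u (hfin.toFinset.card + 1) ⊆ hfin.toFinset :=
    fun x hx => hfin.mem_toFinset.2 (mem_iUnion.2 ⟨_, hx⟩)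
  have := Finset.card_le_card hsub
  rw [hcard] at this
  omega

section NormedSpace

variable {E : Type*} [NormedAddCommGroup E] [NormedSpace ℝ E]

lemma one_le_norm_inv_norm_smul_sub {x z : E} (hz : z ≠ 0) (hzx : ‖z‖ ≤ ‖x‖)
    (h : ‖x - z‖ = ‖x‖) : 1 ≤ ‖‖x‖⁻¹ • x - ‖z‖⁻¹ • z‖ := by
  have hz' : 0 < ‖z‖ := norm_pos_iff.2 hz
  have hx : x ≠ 0 := norm_pos_iff.1 (hz'.trans_le hzx)
  have hsplit : x - z = (‖x‖ - ‖z‖) • (‖x‖⁻¹ • x) + ‖z‖ • (‖x‖⁻¹ • x - ‖z‖⁻¹ • z) := by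
    rw [smul_sub, ← add_sub_assoc, ← add_smul, sub_add_cancel,
      smul_inv_smul₀ (norm_ne_zero_iff.2 hx), smul_inv_smul₀ hz'.ne']
  have : ‖x‖ ≤ ‖x‖ - ‖z‖ + ‖z‖ * ‖‖x‖⁻¹ • x - ‖z‖⁻¹ • z‖ :=
    calc ‖x‖ = ‖x - z‖ := h.symm
      _ ≤ _ := hsplit ▸ norm_add_le _ _
      _ = _ := by
        rw [norm_smul_of_nonneg (sub_nonneg.2 hzx), norm_smul_of_nonneg hz'.le,
          norm_smul_of_nonneg (inv_nonneg.2 (norm_nonneg x)),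
          inv_mul_cancel₀ (norm_ne_zero_iff.2 hx), mul_one]
  exact le_of_mul_le_mul_left (by linarith) hz'

theorem AccPt.frequently_accPt_sep_dist_ne [ProperSpace E] {p : E} {S : Set E}
    (h : AccPt p (𝓟 S)) :
    ∃ᶠ x in 𝓝[≠] p, x ∈ S ∧ AccPt p (𝓟 {z ∈ S | dist z x ≠ dist p x}) := by
  simp only [accPt_iff_frequently_nhdsNE] at h ⊢
  by_contra hcon
  have hsph : ∀ᶠ x in 𝓝[≠] p, x ∈ S → ∀ᶠ z in 𝓝[≠] p, z ∈ S → dist z x = dist p x := by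
    filter_upwards [not_frequently.1 hcon] with x hx hxS
    simpa [hxS, not_frequently] using hx
  set dir : E → E := fun x => ‖x - p‖⁻¹ • (x - p)
  obtain ⟨a, -, ha⟩ := (isCompact_closedBall (0 : E) 1).exists_mapClusterPt_of_frequently
    (l := 𝓝[≠] p ⊓ 𝓟 S) (f := dir)
    (frequently_inf_principal.2 (h.mono fun x hx => ⟨hx, inv_norm_smul_mem_unitClosedBall _⟩))
  have hnear : ∃ᶠ x in 𝓝[≠] p, x ∈ S ∧ dist (dir x) a < 1 / 2 :=
    frequently_inf_principal.1 (mapClusterPt_iff_frequently.1 ha _ (ball_mem_nhds a one_half_pos))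
  obtain ⟨x, ⟨hxS, hxa⟩, hxsph, hxne⟩ :=
    (hnear.and_eventually (hsph.and eventually_mem_nhdsWithin)).exists
  have hxp : 0 < ‖x - p‖ := norm_pos_iff.2 (sub_ne_zero.2 hxne)
  obtain ⟨z, ⟨hzS, hza⟩, hzx, hzp, hzlt⟩ := (hnear.and_eventually ((hxsph hxS).and
    (eventually_mem_nhdsWithin.and (nhdsWithin_le_nhds (ball_mem_nhds p hxp))))).exists
  have hdir := one_le_norm_inv_norm_smul_sub (sub_ne_zero.2 hzp)
    (by simpa [dist_eq_norm] using (mem_ball.1 hzlt).le)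
    (by rw [sub_sub_sub_cancel_right, ← dist_eq_norm, dist_comm, hzx hzS, dist_eq_norm'])
  have := dist_triangle_right (dir x) (dir z) a
  rw [dist_eq_norm] at this
  linarith

variable [ProperSpace E]

lemma DistinctDistanceSeed.exists_insert [DecidableEq E] {p : E} {M : Set E} {s : Finset E}
    (h : DistinctDistanceSeed p M s) : ∃ y ∉ s, DistinctDistanceSeed p M (insert y s) := by
  obtain ⟨hsM, hdist, hacc⟩ := h
  have hfresh : ∀ᶠ y in 𝓝[≠] p, y ∉ s := nhdsNE_le_cofinite p s.eventually_cofinite_notMem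
  have hgrow : ∀ᶠ y in 𝓝[≠] p, _ :=
    (hdist.eventually_insert (s.finite_toSet.insert p) (mem_insert p _)).filter_mono
      nhdsWithin_le_nhds
  obtain ⟨y, ⟨⟨hyM, hysph⟩, hyacc⟩, hyp, hys, hyd⟩ :=
    (hacc.frequently_accPt_sep_dist_ne.and_eventually
      (eventually_mem_nhdsWithin.and (hfresh.and hgrow))).exists
  refine ⟨y, hys, ?_, ?_, ?_⟩
  · rw [Finset.coe_insert]
    exact insert_subset hyM hsM
  · rw [Finset.coe_insert, insert_comm]
    refine hyd (forall_mem_insert.2 ⟨?_, hysph⟩)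
    rwa [dist_self, dist_ne_zero]
  · convert hyacc using 3
    ext z
    simp only [Finset.mem_insert, forall_eq_or_imp, mem_ofPred_eq]
    tauto

theorem Set.Infinite.exists_infinite_subset_hasDistinctDistances {M : Set E} (hM : M.Infinite)
    (hb : IsBounded M) : ∃ M' ⊆ M, M'.Infinite ∧ HasDistinctDistances M' := by
  classical
  obtain ⟨p, -, hp⟩ := hM.exists_accPt_of_subset_isCompact hb.isCompact_closure subset_closure
  have hseed : DistinctDistanceSeed p M ∅ :=
    ⟨by simp, fun x hx x' hx' _ _ _ _ hxx' => by simp_all, by simpa using hp⟩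
  obtain ⟨u, hu, hP, hinf⟩ :=
    Finset.exists_monotone_of_forall_exists_insert hseed fun s hs => hs.exists_insert
  exact ⟨⋃ t, (u t : Set E), iUnion_subset fun t => (hP t).1, hinf,
    hasDistinctDistances_iUnion (fun _ _ hst => Finset.coe_subset.2 (hu hst))
      fun t => (hP t).2.1.mono (subset_insert _ _)⟩

end NormedSpace

-- A type synonym: `Fin n → ℝ` already carries the sup norm.
def RenormedSpace (n : ℕ) (_N : (Fin n → ℝ) → ℝ) : Type := Fin n → ℝ

namespace RenormedSpace

variable {n : ℕ} {N : (Fin n → ℝ) → ℝ}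

instance : AddCommGroup (RenormedSpace n N) := inferInstanceAs (AddCommGroup (Fin n → ℝ))
instance : Module ℝ (RenormedSpace n N) := inferInstanceAs (Module ℝ (Fin n → ℝ))
instance : FiniteDimensional ℝ (RenormedSpace n N) :=
  inferInstanceAs (FiniteDimensional ℝ (Fin n → ℝ))
instance : Norm (RenormedSpace n N) := ⟨N⟩

end RenormedSpace

theorem IsNormOn.nonneg {n : ℕ} {N : (Fin n → ℝ) → ℝ} (hN : IsNormOn n N) (x : Fin n → ℝ) :
    0 ≤ N x := by
  have hneg : N (-x) = N x := by simpa using hN.2.1 (-1) x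
  have := hN.2.2 x (-x)
  rw [add_neg_cancel, (hN.1 0).2 rfl, hneg] at this
  linarith

theorem IsNormOn.normedSpaceCore {n : ℕ} {N : (Fin n → ℝ) → ℝ} (hN : IsNormOn n N) :
    NormedSpace.Core ℝ (RenormedSpace n N) where
  norm_nonneg := hN.nonneg
  norm_smul c x := hN.2.1 c x
  norm_triangle := hN.2.2
  norm_eq_zero_iff := hN.1

/-- Every infinite bounded set `M ⊆ ℝⁿ` contains an infinite subset all of whose pairwise
`N`-distances are distinct. -/
theorem exists_infinite_subset_distinct_distances (n : ℕ) (N : (Fin n → ℝ) → ℝ)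
    (hN : IsNormOn n N) (M : Set (Fin n → ℝ)) (hMinf : M.Infinite)
    (hMbdd : ∃ (x₀ : Fin n → ℝ) (R : ℝ), ∀ x ∈ M, N (x - x₀) ≤ R) :
    ∃ M' : Set (Fin n → ℝ), M' ⊆ M ∧ M'.Infinite ∧
      ∀ x ∈ M', ∀ x' ∈ M', ∀ y ∈ M', ∀ y' ∈ M', x ≠ x' → y ≠ y' →
        N (x - x') = N (y - y') → ({x, x'} : Set (Fin n → ℝ)) = {y, y'} := by
  let := NormedAddCommGroup.ofCore hN.normedSpaceCore
  let := NormedSpace.ofCore hN.normedSpaceCore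
  have hdist : ∀ x y : RenormedSpace n N, dist x y = N (x - y) := fun x y => dist_eq_norm x y
  obtain ⟨x₀, R, hR⟩ := hMbdd
  have hb : IsBounded (α := RenormedSpace n N) M :=
    isBounded_closedBall.subset fun x hx => (hdist x x₀).trans_le (hR x hx)
  obtain ⟨M', hM'M, hM'inf, hM'⟩ :=
    Set.Infinite.exists_infinite_subset_hasDistinctDistances (E := RenormedSpace n N) hMinf hb
  refine ⟨M', hM'M, hM'inf, fun x hx x' hx' y hy y' hy' hxx' hyy' hxy => ?_⟩
  exact hM' x hx x' hx' y hy y' hy' hxx' hyy' ((hdist x x').trans (hxy.trans (hdist y y').symm))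
end

section
/- Let N be a norm on ℝⁿ, let y ∈ ℝⁿ, and let (x^i)_{i≥1} be a sequence of points of ℝⁿ with x^i ≠ y for all i and ‖x^{i+1} − y‖_N ≤ (1/3)·‖x^i − y‖_N for all i. Then for all indices i < k₁ and j < k₂, the equality ‖x^i − x^{k₁}‖_N = ‖x^j − x^{k₂}‖_N implies i = j. -/
/-- For a sequence of points different from `y` converging to `y` at least geometrically
with ratio 1/3, if two pairs of points of the sequence are at the same `N`-distance,
then the smaller indices of the pairs coincide. -/
theorem smaller_indices_coincide (n : ℕ) (N : (Fin n → ℝ) → ℝ) (hN : IsNormOn n N)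
    (y : Fin n → ℝ) (x : ℕ → (Fin n → ℝ))
    (hne : ∀ i, x i ≠ y)
    (hgeom : ∀ i, N (x (i + 1) - y) ≤ (1 / 3) * N (x i - y)) :
    ∀ i k₁ j k₂ : ℕ, i < k₁ → j < k₂ →
      N (x i - x k₁) = N (x j - x k₂) → i = j := by
  obtain ⟨h0, hhom, htri⟩ := hN
  have hzero : N 0 = 0 := (h0 0).mpr rfl
  have hneg : ∀ z, N (-z) = N z := by
    intro z
    have := hhom (-1) z
    simpa using this
  have hnn : ∀ z, 0 ≤ N z := by
    intro z
    have h := htri z (-z)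
    rw [add_neg_cancel, hzero, hneg] at h
    linarith
  have hpos : ∀ i, 0 < N (x i - y) := by
    intro i
    rcases lt_or_eq_of_le (hnn (x i - y)) with h | h
    · exact h
    · exact absurd (sub_eq_zero.mp ((h0 _).mp h.symm)) (hne i)
  have hmono : ∀ i k, i ≤ k → N (x k - y) ≤ N (x i - y) := by
    intro i k hik
    induction k with
    | zero => simp_all
    | succ m ih =>
      rcases Nat.lt_or_ge i (m + 1) with h | h
      · have h1 := hgeom m
        have h2 := ih (Nat.lt_succ_iff.mp h)
        have h3 := hnn (x m - y)
        linarith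
      · have : i = m + 1 := le_antisymm hik h
        simp [this]
  have hstep : ∀ i k, i < k → N (x k - y) ≤ (1 / 3) * N (x i - y) := by
    intro i k h
    exact le_trans (hmono (i + 1) k h) (hgeom i)
  have hupper : ∀ a b, a < b → N (x a - x b) ≤ (4 / 3) * N (x a - y) := by
    intro a b hab
    have h1 : N (x a - x b) ≤ N (x a - y) + N (y - x b) := by
      have := htri (x a - y) (y - x b)
      simpa [sub_add_sub_cancel] using this
    have h2 : N (y - x b) = N (x b - y) := by rw [← hneg (x b - y), neg_sub]
    have h3 := hstep a b hab
    linarith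
  have hlower : ∀ a b, a < b → (2 / 3) * N (x a - y) ≤ N (x a - x b) := by
    intro a b hab
    have h1 : N (x a - y) ≤ N (x a - x b) + N (x b - y) := by
      have := htri (x a - x b) (x b - y)
      simpa [sub_add_sub_cancel] using this
    have h3 := hstep a b hab
    linarith
  intro i k₁ j k₂ hik hjk hEq
  rcases lt_trichotomy i j with h | h | h
  · exfalso
    have h1 := hupper j k₂ hjk
    have h2 := hlower i k₁ hik
    have h3 := hstep i j h
    have h4 := hpos i
    linarith
  · exact h
  · exfalso
    have h1 := hupper i k₁ hik
    have h2 := hlower j k₂ hjk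
    have h3 := hstep j i h
    have h4 := hpos j
    linarith
end

section
/- Let 1 < p < ∞ and let M ⊂ ℝ² be an infinite set contained in a line whose pairwise ℓ_p-distances are all distinct (for x, x', y, y' ∈ M with x ≠ x', y ≠ y', the equality ‖x − x'‖_p = ‖y − y'‖_p implies {x, x'} = {y, y'}). If e and f are ℓ_p-isometric copies of M whose intersection e ∩ f contains at least 3 points, then e = f. -/
/-- The ℓ_p-norm on the plane ℝ² (represented as `Fin 2 → ℝ`). -/
noncomputable def lpNorm (p : ℝ) (x : Fin 2 → ℝ) : ℝ :=
  (|x 0| ^ p + |x 1| ^ p) ^ (1 / p)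

/-- `M'` is an `N`-isometric copy of `M`: there is a bijection from `M` onto `M'`
preserving `N`-distances. -/
def IsometricCopy (N : (Fin 2 → ℝ) → ℝ) (M M' : Set (Fin 2 → ℝ)) : Prop :=
  ∃ f : (Fin 2 → ℝ) → (Fin 2 → ℝ), Set.BijOn f M M' ∧
    ∀ x ∈ M, ∀ y ∈ M, N (f x - f y) = N (x - y)

/-!
For `1 < p` the ℓ_p-plane is strictly convex, so equality in the triangle inequality forces
betweenness. Hence a distance-preserving image of a collinear set is collinear, and a point of a
line is pinned down by its distances to two distinct points of that line. Write `e = g '' M` and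
`f = h '' M`. As distances in `M` determine the pair realising them, `g` and `h` pull back each
pair of common points to the same pair of `M`, and the third common point rules out the swap; so
`g` and `h` agree at two points of `M`, hence on all of `M`.
-/

open Set
open scoped ENNReal

theorem strictConvexOn_abs_rpow {p : ℝ} (hp : 1 < p) :
    StrictConvexOn ℝ univ fun x : ℝ => |x| ^ p := by
  refine ⟨convex_univ, fun x _ y _ hxy a b ha hb hab => ?_⟩
  simp only [smul_eq_mul]
  have hp0 : 0 < p := by linarith
  rcases eq_or_ne |x| |y| with hxy' | hxy'
  · obtain rfl : x = -y := (abs_eq_abs.mp hxy').resolve_left hxy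
    have hy : y ≠ 0 := by rintro rfl; simp at hxy
    have hlt : |a * -y + b * y| < |y| := by
      rw [show a * -y + b * y = (b - a) * y by ring, abs_mul]
      exact mul_lt_of_lt_one_left (abs_pos.mpr hy) (abs_lt.mpr ⟨by linarith, by linarith⟩)
    calc |a * -y + b * y| ^ p < |y| ^ p := Real.rpow_lt_rpow (abs_nonneg _) hlt hp0
      _ = a * |-y| ^ p + b * |y| ^ p := by rw [abs_neg, ← add_mul, hab, one_mul]
  · have htri : |a * x + b * y| ≤ a * |x| + b * |y| := by
      simpa only [abs_mul, abs_of_pos ha, abs_of_pos hb] using abs_add_le (a * x) (b * y)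
    calc |a * x + b * y| ^ p ≤ (a * |x| + b * |y|) ^ p :=
          Real.rpow_le_rpow (abs_nonneg _) htri hp0.le
      _ < a * |x| ^ p + b * |y| ^ p :=
          (strictConvexOn_rpow hp).2 (abs_nonneg x) (abs_nonneg y) hxy' ha hb hab

theorem PiLp.norm_rpow_toReal_eq_sum {ι : Type*} [Fintype ι] {p : ℝ≥0∞} (hp : 0 < p.toReal)
    (x : PiLp p fun _ : ι => ℝ) : ‖x‖ ^ p.toReal = ∑ i, |x i| ^ p.toReal := by
  rw [PiLp.norm_eq_sum hp, one_div, Real.rpow_inv_rpow (by positivity) hp.ne']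
  simp only [Real.norm_eq_abs]

theorem PiLp.strictConvexSpace {ι : Type*} [Fintype ι] {p : ℝ≥0∞} [Fact (1 ≤ p)]
    (hp : 1 < p) (hp' : p ≠ ∞) : StrictConvexSpace ℝ (PiLp p fun _ : ι => ℝ) := by
  have hq : 1 < p.toReal := by
    simpa using (ENNReal.toReal_lt_toReal ENNReal.one_ne_top hp').mpr hp
  have hq0 : 0 < p.toReal := by linarith
  refine StrictConvexSpace.of_norm_combo_lt_one fun x y hx hy hxy => ⟨1 / 2, 1 / 2, by norm_num, ?_⟩
  obtain ⟨i, hi⟩ : ∃ i, x i ≠ y i := by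
    by_contra! h
    exact hxy (PiLp.ext h)
  have hconv := strictConvexOn_abs_rpow hq
  have hsum : ‖(1 / 2 : ℝ) • x + (1 / 2 : ℝ) • y‖ ^ p.toReal < 1 := by
    rw [PiLp.norm_rpow_toReal_eq_sum hq0]
    calc ∑ j, |((1 / 2 : ℝ) • x + (1 / 2 : ℝ) • y) j| ^ p.toReal
        < ∑ j, ((1 / 2 : ℝ) * |x j| ^ p.toReal + (1 / 2 : ℝ) * |y j| ^ p.toReal) := by
          refine Finset.sum_lt_sum (fun j _ => ?_) ⟨i, Finset.mem_univ _, ?_⟩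
          · exact hconv.convexOn.2 (mem_univ _) (mem_univ _) (by norm_num) (by norm_num)
              (by norm_num)
          · exact hconv.2 (mem_univ _) (mem_univ _) hi (by norm_num) (by norm_num) (by norm_num)
      _ = 1 := by
          rw [Finset.sum_add_distrib, ← Finset.mul_sum, ← Finset.mul_sum,
            ← PiLp.norm_rpow_toReal_eq_sum hq0, ← PiLp.norm_rpow_toReal_eq_sum hq0, hx, hy]
          norm_num
  by_contra! h
  exact hsum.not_ge (Real.one_le_rpow h hq0.le)

section

variable {V P W Q : Type*} [NormedAddCommGroup V] [NormedSpace ℝ V] [MetricSpace P]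
  [NormedAddTorsor V P] [NormedAddCommGroup W] [NormedSpace ℝ W] [MetricSpace Q]
  [NormedAddTorsor W Q]

theorem eq_of_mem_affineSpan_pair_of_dist_eq {x y w w' : P} (hxy : x ≠ y)
    (hw : w ∈ line[ℝ, x, y]) (hw' : w' ∈ line[ℝ, x, y]) (hx : dist w x = dist w' x)
    (hy : dist w y = dist w' y) : w = w' := by
  obtain ⟨r, rfl⟩ := mem_affineSpan_pair_iff_exists_lineMap_eq.mp hw
  obtain ⟨r', rfl⟩ := mem_affineSpan_pair_iff_exists_lineMap_eq.mp hw'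
  have hd : dist x y ≠ 0 := dist_ne_zero.mpr hxy
  rw [dist_lineMap_left, dist_lineMap_left, Real.norm_eq_abs, Real.norm_eq_abs] at hx
  rw [dist_lineMap_right, dist_lineMap_right, Real.norm_eq_abs, Real.norm_eq_abs] at hy
  have h₁ := abs_eq_abs.mp (mul_right_cancel₀ hd hx)
  have h₂ := abs_eq_abs.mp (mul_right_cancel₀ hd hy)
  obtain rfl : r = r' := by rcases h₁ with h₁ | h₁ <;> rcases h₂ with h₂ | h₂ <;> linarith
  rfl

variable [StrictConvexSpace ℝ W]

theorem Wbtw.wbtw_of_dist_eq {a b c : P} (h : Wbtw ℝ a b c) {a' b' c' : Q}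
    (hab : dist a' b' = dist a b) (hbc : dist b' c' = dist b c) (hac : dist a' c' = dist a c) :
    Wbtw ℝ a' b' c' := by
  rw [← dist_add_dist_eq_iff, hab, hbc, hac]
  exact h.dist_add_dist

theorem Collinear.collinear_of_dist_eq {a b c : P} (h : Collinear ℝ {a, b, c}) {a' b' c' : Q}
    (hab : dist a' b' = dist a b) (hbc : dist b' c' = dist b c) (hac : dist a' c' = dist a c) :
    Collinear ℝ {a', b', c'} := by
  rcases h.wbtw_or_wbtw_or_wbtw with h | h | h
  · exact (h.wbtw_of_dist_eq hab hbc hac).collinear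
  · have := (h.wbtw_of_dist_eq hbc (by rw [dist_comm, hac, dist_comm])
      (by rw [dist_comm, hab, dist_comm])).collinear
    rwa [pair_comm c' a', insert_comm b' a'] at this
  · have := (h.wbtw_of_dist_eq (by rw [dist_comm, hac, dist_comm]) hab
      (by rw [dist_comm, hbc, dist_comm])).collinear
    rwa [insert_comm c' a', pair_comm c' b'] at this

end

theorem Collinear.eqOn_of_dist_eq {V P W Q : Type*} [NormedAddCommGroup V] [NormedSpace ℝ V]
    [MetricSpace P] [NormedAddTorsor V P] [NormedAddCommGroup W] [NormedSpace ℝ W]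
    [StrictConvexSpace ℝ W] [MetricSpace Q] [NormedAddTorsor W Q] {s : Set P} (hs : Collinear ℝ s)
    {g h : P → Q}
    (hg : ∀ x ∈ s, ∀ y ∈ s, dist (g x) (g y) = dist x y)
    (hh : ∀ x ∈ s, ∀ y ∈ s, dist (h x) (h y) = dist x y) {a b : P} (ha : a ∈ s) (hb : b ∈ s)
    (hab : a ≠ b) (hga : g a = h a) (hgb : g b = h b) : EqOn g h s := by
  have mem_line : ∀ k : P → Q, (∀ x ∈ s, ∀ y ∈ s, dist (k x) (k y) = dist x y) →
      ∀ m ∈ s, k m ∈ line[ℝ, k a, k b] := by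
    intro k hk m hm
    have hcol : Collinear ℝ {k a, k b, k m} :=
      (hs.subset (insert_subset ha (pair_subset hb hm))).collinear_of_dist_eq
        (hk a ha b hb) (hk b hb m hm) (hk a ha m hm)
    refine hcol.mem_affineSpan_of_mem_of_ne (by simp) (by simp) (by simp) ?_
    rw [← dist_ne_zero, hk a ha b hb]
    exact dist_ne_zero.mpr hab
  intro m hm
  refine eq_of_mem_affineSpan_pair_of_dist_eq (x := g a) (y := g b) ?_ (mem_line g hg m hm)
    ?_ ?_ ?_
  · rw [← dist_ne_zero, hg a ha b hb]
    exact dist_ne_zero.mpr hab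
  · rw [hga, hgb]
    exact mem_line h hh m hm
  · rw [hg m hm a ha, hga, hh m hm a ha]
  · rw [hg m hm b hb, hgb, hh m hm b hb]

theorem lpNorm_eq_norm_toLp {p : ℝ} (hp : 0 < p) (x : Fin 2 → ℝ) :
    lpNorm p x = ‖WithLp.toLp (ENNReal.ofReal p) x‖ := by
  have hp' : (ENNReal.ofReal p).toReal = p := ENNReal.toReal_ofReal hp.le
  rw [PiLp.norm_eq_sum (hp'.symm ▸ hp), hp', Fin.sum_univ_two]
  rfl

theorem collinear_toLp_image_of_subset_line {p : ℝ≥0∞} {M : Set (Fin 2 → ℝ)}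
    {a b : Fin 2 → ℝ} (hM : M ⊆ {x | ∃ t : ℝ, x = a + t • b}) :
    Collinear ℝ (WithLp.toLp p '' M) := by
  refine (collinear_iff_exists_forall_eq_smul_vadd _).mpr ⟨WithLp.toLp p a, WithLp.toLp p b, ?_⟩
  rintro _ ⟨x, hx, rfl⟩
  obtain ⟨t, rfl⟩ := hM hx
  exact ⟨t, by simp [add_comm]⟩

theorem eqOn_of_lpNorm_isometricOn_line {p : ℝ} (hp : 1 < p) {M : Set (Fin 2 → ℝ)}
    {a b : Fin 2 → ℝ} (hM : M ⊆ {x | ∃ t : ℝ, x = a + t • b}) {g h : (Fin 2 → ℝ) → Fin 2 → ℝ}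
    (hg : ∀ x ∈ M, ∀ y ∈ M, lpNorm p (g x - g y) = lpNorm p (x - y))
    (hh : ∀ x ∈ M, ∀ y ∈ M, lpNorm p (h x - h y) = lpNorm p (x - y))
    {u v : Fin 2 → ℝ} (hu : u ∈ M) (hv : v ∈ M) (huv : u ≠ v) (hgu : g u = h u)
    (hgv : g v = h v) : EqOn g h M := by
  have : Fact (1 ≤ ENNReal.ofReal p) := ⟨by simpa using hp.le⟩
  have := PiLp.strictConvexSpace (ι := Fin 2) (by simpa using hp) ENNReal.ofReal_ne_top
  let T := WithLp.toLp (ENNReal.ofReal p) (V := Fin 2 → ℝ)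
  have hT : ∀ x y, dist (T x) (T y) = lpNorm p (x - y) := fun x y => by
    rw [dist_eq_norm, lpNorm_eq_norm_toLp (by linarith)]
    rfl
  have isometricOn : ∀ k : (Fin 2 → ℝ) → Fin 2 → ℝ,
      (∀ x ∈ M, ∀ y ∈ M, lpNorm p (k x - k y) = lpNorm p (x - y)) →
      ∀ x ∈ T '' M, ∀ y ∈ T '' M, dist (T (k x.ofLp)) (T (k y.ofLp)) = dist x y := by
    rintro k hk _ ⟨x, hx, rfl⟩ _ ⟨y, hy, rfl⟩
    simp only [T, hT, hk x hx y hy]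
  have hc : Collinear ℝ (T '' M) := collinear_toLp_image_of_subset_line hM
  intro m hm
  exact congrArg WithLp.ofLp <| hc.eqOn_of_dist_eq (isometricOn g hg) (isometricOn h hh)
    (mem_image_of_mem T hu) (mem_image_of_mem T hv) (fun heq => huv (congrArg WithLp.ofLp heq))
    (congrArg T hgu) (congrArg T hgv) (mem_image_of_mem T hm)

theorem eq_of_pair_eq_pair_of_pair_eq_pair {α : Type*} {a b c a' b' c' : α}
    (h₁ : ({a, b} : Set α) = {a', b'}) (h₂ : ({a, c} : Set α) = {a', c'}) (hbc : b' ≠ c') :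
    a = a' := by
  rcases pair_eq_pair_iff.mp h₁ with ⟨rfl, -⟩ | ⟨rfl, -⟩
  · rfl
  · rcases pair_eq_pair_iff.mp h₂ with ⟨rfl, -⟩ | ⟨rfl, -⟩
    · rfl
    · exact absurd rfl hbc

theorem pair_eq_pair_of_isometricOn {E : Type*} [AddGroup E] {N : E → ℝ} {M : Set E}
    (hdist : ∀ x ∈ M, ∀ x' ∈ M, ∀ y ∈ M, ∀ y' ∈ M, x ≠ x' → y ≠ y' →
      N (x - x') = N (y - y') → ({x, x'} : Set E) = {y, y'})
    {g h : E → E} (hg : ∀ x ∈ M, ∀ y ∈ M, N (g x - g y) = N (x - y))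
    (hh : ∀ x ∈ M, ∀ y ∈ M, N (h x - h y) = N (x - y)) {u v u' v' : E} (hu : u ∈ M)
    (hv : v ∈ M) (hu' : u' ∈ M) (hv' : v' ∈ M) (huu' : h u' = g u) (hvv' : h v' = g v)
    (huv : g u ≠ g v) : ({u, v} : Set E) = {u', v'} := by
  refine hdist u hu v hv u' hu' v' hv' (fun heq => huv (congrArg g heq))
    (fun heq => huv (by rw [← huu', ← hvv', heq])) ?_
  rw [← hg u hu v hv, ← hh u' hu' v' hv', huu', hvv']

theorem collinear_copies_eq_of_three_common_points_general (p : ℝ) (hp : 1 < p)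
    (M : Set (Fin 2 → ℝ))
    (hline : ∃ a b : Fin 2 → ℝ, b ≠ 0 ∧ M ⊆ {x | ∃ t : ℝ, x = a + t • b})
    (hdist : ∀ x ∈ M, ∀ x' ∈ M, ∀ y ∈ M, ∀ y' ∈ M, x ≠ x' → y ≠ y' →
      lpNorm p (x - x') = lpNorm p (y - y') → ({x, x'} : Set (Fin 2 → ℝ)) = {y, y'})
    (e f : Set (Fin 2 → ℝ))
    (he : IsometricCopy (lpNorm p) M e) (hf : IsometricCopy (lpNorm p) M f)
    (hcommon : ∃ x ∈ e ∩ f, ∃ y ∈ e ∩ f, ∃ z ∈ e ∩ f, x ≠ y ∧ x ≠ z ∧ y ≠ z) :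
    e = f := by
  obtain ⟨g, hg, hgd⟩ := he
  obtain ⟨h, hh, hhd⟩ := hf
  obtain ⟨x, ⟨hxe, hxf⟩, y, ⟨hye, hyf⟩, z, ⟨hze, hzf⟩, hxy, hxz, hyz⟩ := hcommon
  obtain ⟨mx, hmx, rfl⟩ := hg.surjOn hxe
  obtain ⟨my, hmy, rfl⟩ := hg.surjOn hye
  obtain ⟨mz, hmz, rfl⟩ := hg.surjOn hze
  obtain ⟨nx, hnx, hx⟩ := hh.surjOn hxf
  obtain ⟨ny, hny, hy⟩ := hh.surjOn hyf
  obtain ⟨nz, hnz, hz⟩ := hh.surjOn hzf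
  have hx' : mx = nx := eq_of_pair_eq_pair_of_pair_eq_pair
    (pair_eq_pair_of_isometricOn hdist hgd hhd hmx hmy hnx hny hx hy hxy)
    (pair_eq_pair_of_isometricOn hdist hgd hhd hmx hmz hnx hnz hx hz hxz)
    (fun heq => hyz (by rw [← hy, ← hz, heq]))
  have hy' : my = ny := eq_of_pair_eq_pair_of_pair_eq_pair
    (pair_eq_pair_of_isometricOn hdist hgd hhd hmy hmx hny hnx hy hx hxy.symm)
    (pair_eq_pair_of_isometricOn hdist hgd hhd hmy hmz hny hnz hy hz hyz)
    (fun heq => hxz (by rw [← hx, ← hz, heq]))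
  obtain ⟨a, b, -, hM⟩ := hline
  have hgh : EqOn g h M := eqOn_of_lpNorm_isometricOn_line hp hM hgd hhd hmx hmy
    (fun heq => hxy (congrArg g heq)) (by rw [← hx, hx']) (by rw [← hy, hy'])
  rw [← hg.image_eq, ← hh.image_eq, image_congr hgh]

/-- If `M ⊆ ℝ²` is infinite, collinear, and has pairwise distinct ℓ_p-distances, then two
ℓ_p-isometric copies of `M` sharing at least three points coincide. -/
theorem collinear_copies_eq_of_three_common_points (p : ℝ) (hp : 1 < p)
    (M : Set (Fin 2 → ℝ)) (hMinf : M.Infinite)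
    (hline : ∃ a b : Fin 2 → ℝ, b ≠ 0 ∧ M ⊆ {x | ∃ t : ℝ, x = a + t • b})
    (hdist : ∀ x ∈ M, ∀ x' ∈ M, ∀ y ∈ M, ∀ y' ∈ M, x ≠ x' → y ≠ y' →
      lpNorm p (x - x') = lpNorm p (y - y') → ({x, x'} : Set (Fin 2 → ℝ)) = {y, y'})
    (e f : Set (Fin 2 → ℝ))
    (he : IsometricCopy (lpNorm p) M e) (hf : IsometricCopy (lpNorm p) M f)
    (hcommon : ∃ x ∈ e ∩ f, ∃ y ∈ e ∩ f, ∃ z ∈ e ∩ f, x ≠ y ∧ x ≠ z ∧ y ≠ z) :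
    e = f :=
  collinear_copies_eq_of_three_common_points_general p hp M hline hdist e f he hf hcommon
end

section
/- Let M ⊂ ℝ² be an infinite set such that every line contains only finitely many points of M. Then there exists an infinite subset M₂ ⊆ M such that no three distinct points of M₂ are collinear. -/
/-- If `M ⊆ ℝ²` is infinite and every line contains only finitely many points of `M`,
then `M` has an infinite subset with no three distinct points collinear. -/
theorem exists_infinite_subset_no_three_collinear (M : Set (Fin 2 → ℝ))
    (hMinf : M.Infinite)
    (hlines : ∀ a b : Fin 2 → ℝ, b ≠ 0 →
      (M ∩ {x | ∃ t : ℝ, x = a + t • b}).Finite) :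
    ∃ M₂ : Set (Fin 2 → ℝ), M₂ ⊆ M ∧ M₂.Infinite ∧
      ∀ x ∈ M₂, ∀ y ∈ M₂, ∀ z ∈ M₂, x ≠ y → x ≠ z → y ≠ z →
        ¬ Collinear ℝ ({x, y, z} : Set (Fin 2 → ℝ)) := by
  classical
  -- The set of points of `M` collinear with a pair from a finite set is finite.
  have key : ∀ S : Finset (Fin 2 → ℝ),
      (M ∩ {x | ∃ y ∈ S, ∃ z ∈ S, y ≠ z ∧
        Collinear ℝ ({x, y, z} : Set (Fin 2 → ℝ))}).Finite := by
    intro S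
    have hsub : (M ∩ {x | ∃ y ∈ S, ∃ z ∈ S, y ≠ z ∧
        Collinear ℝ ({x, y, z} : Set (Fin 2 → ℝ))})
        ⊆ ⋃ y ∈ S, ⋃ z ∈ S, M ∩ {x | ∃ t : ℝ, x = y + t • (z - y)} := by
      rintro x ⟨hxM, y, hy, z, hz, hyz, hcol⟩
      refine Set.mem_iUnion₂.2 ⟨y, hy, Set.mem_iUnion₂.2 ⟨z, hz, hxM, ?_⟩⟩
      have hx : x ∈ line[ℝ, y, z] :=
        hcol.mem_affineSpan_of_mem_of_ne (by simp) (by simp) (by simp) hyz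
      have hx' : (x - y) +ᵥ y ∈ line[ℝ, y, z] := by simp only [vadd_eq_add, sub_add_cancel]; exact hx
      obtain ⟨t, ht⟩ := (vadd_left_mem_affineSpan_pair).1 hx'
      exact ⟨t, by simp only [vsub_eq_sub] at ht; rw [ht]; abel⟩
    refine Set.Finite.subset ?_ hsub
    refine Set.Finite.biUnion S.finite_toSet fun y _ =>
      Set.Finite.biUnion S.finite_toSet fun z _ => ?_
    by_cases h : z = y
    · subst h
      refine Set.Finite.subset (Set.finite_singleton z) ?_
      rintro x ⟨-, t, ht⟩
      simp [ht]
    · exact hlines y (z - y) (sub_ne_zero.2 h)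
  -- We can always pick a new point of `M` not collinear with any pair from `S`.
  have pick : ∀ S : Finset (Fin 2 → ℝ), ∃ x, x ∈ M ∧ x ∉ S ∧
      ∀ y ∈ S, ∀ z ∈ S, y ≠ z →
        ¬ Collinear ℝ ({x, y, z} : Set (Fin 2 → ℝ)) := by
    intro S
    obtain ⟨x, hx⟩ := (hMinf.diff ((key S).union S.finite_toSet)).nonempty
    rw [Set.mem_diff, Set.mem_union] at hx
    push_neg at hx
    obtain ⟨hxM, h1, h2⟩ := hx
    refine ⟨x, hxM, by simpa using h2, fun y hy z hz hyz hcol => ?_⟩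
    exact h1 ⟨hxM, y, hy, z, hz, hyz, hcol⟩
  choose f hfM hfnot hfcol using pick
  -- Build the nested finite sets.
  obtain ⟨F, hF0, hFsucc⟩ : ∃ F : ℕ → Finset (Fin 2 → ℝ), F 0 = ∅ ∧
      ∀ n, F (n + 1) = insert (f (F n)) (F n) :=
    ⟨fun n => Nat.rec ∅ (fun _ S => insert (f S) S) n, rfl, fun _ => rfl⟩
  have hFmono : ∀ m n, m ≤ n → F m ⊆ F n := by
    intro m n h
    induction n with
    | zero => simp [Nat.le_zero.1 h]
    | succ n ih =>
      rcases Nat.lt_or_ge m (n + 1) with h' | h'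
      · exact (ih (Nat.lt_succ_iff.1 h')).trans (by rw [hFsucc]; exact Finset.subset_insert _ _)
      · have : m = n + 1 := le_antisymm h h'
        simp [this]
  have hFM : ∀ n, ∀ x ∈ F n, x ∈ M := by
    intro n
    induction n with
    | zero => simp [hF0]
    | succ n ih =>
      intro x hx
      rw [hFsucc] at hx
      rcases Finset.mem_insert.1 hx with h | h
      · subst h; exact hfM (F n)
      · exact ih x h
  have hFgood : ∀ n, ∀ x ∈ F n, ∀ y ∈ F n, ∀ z ∈ F n, x ≠ y → x ≠ z → y ≠ z →
      ¬ Collinear ℝ ({x, y, z} : Set (Fin 2 → ℝ)) := by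
    intro n
    induction n with
    | zero => simp [hF0]
    | succ n ih =>
      intro x hx y hy z hz hxy hxz hyz
      rw [hFsucc] at hx hy hz
      rcases Finset.mem_insert.1 hx with hx | hx
      · subst hx
        have hy' : y ∈ F n := (Finset.mem_insert.1 hy).resolve_left (fun h => hxy h.symm)
        have hz' : z ∈ F n := (Finset.mem_insert.1 hz).resolve_left (fun h => hxz h.symm)
        exact hfcol (F n) y hy' z hz' hyz
      rcases Finset.mem_insert.1 hy with hy | hy
      · have hz' : z ∈ F n := (Finset.mem_insert.1 hz).resolve_left
          (fun h => hyz (h.trans hy.symm).symm)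
        intro hcol
        refine hfcol (F n) x hx z hz' hxz ?_
        rw [← hy]
        rwa [Set.insert_comm x y {z}] at hcol
      rcases Finset.mem_insert.1 hz with hz | hz
      · intro hcol
        refine hfcol (F n) x hx y hy hxy ?_
        rw [← hz]
        have hperm : ({x, y, z} : Set (Fin 2 → ℝ)) = {z, x, y} := by
          ext w; simp only [Set.mem_insert_iff, Set.mem_singleton_iff]; tauto
        rwa [hperm] at hcol
      · exact ih x hx y hy z hz hxy hxz hyz
  -- The union of all `F n`.
  refine ⟨⋃ n, ((F n : Finset (Fin 2 → ℝ)) : Set (Fin 2 → ℝ)), ?_, ?_, ?_⟩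
  · exact Set.iUnion_subset fun n x hx => hFM n x hx
  · apply Set.infinite_of_injective_forall_mem (f := fun n => f (F n))
    · intro m n hmn
      simp only at hmn
      by_contra hne
      wlog h : m < n generalizing m n
      · exact this hmn.symm (Ne.symm hne) ((Ne.lt_or_gt hne).resolve_left h)
      · have h1 : f (F m) ∈ F n := hFmono (m + 1) n h (by rw [hFsucc]; exact Finset.mem_insert_self _ _)
        rw [hmn] at h1
        exact hfnot (F n) h1
    · intro n
      exact Set.mem_iUnion.2 ⟨n + 1, by rw [hFsucc]; exact_mod_cast Finset.mem_insert_self _ _⟩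
  · intro x hx y hy z hz hxy hxz hyz
    obtain ⟨nx, hnx⟩ := Set.mem_iUnion.1 hx
    obtain ⟨ny, hny⟩ := Set.mem_iUnion.1 hy
    obtain ⟨nz, hnz⟩ := Set.mem_iUnion.1 hz
    set n := max nx (max ny nz)
    exact hFgood n x (hFmono nx n (le_max_left _ _) hnx)
      y (hFmono ny n ((le_max_left _ _).trans (le_max_right _ _)) hny)
      z (hFmono nz n ((le_max_right _ _).trans (le_max_right _ _)) hnz) hxy hxz hyz
end

section
/- Let N be a norm on ℝ², let x, w ∈ ℝ² and τ > 0 be such that ‖x + t·w‖_N = 1 for all real t with |t| ≤ τ, and let 0 < q < 1. For each integer i ≥ 0 let z^i = (∑_{l=0}^{i−1} q^l)·x + t_i·w where t_i ∈ ℝ satisfies |t_i| ≤ τ·q^i/2. Then for all 0 ≤ i < j we have ‖z^j − z^i‖_N = ∑_{l=i}^{j−1} q^l = (q^i − q^j)/(1−q); consequently the set {z⁰, z¹, z², …} is an N-isometric copy of the geometric progression G(q). -/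
/-- `N` is a norm on the plane. -/
def IsNorm2 (N : (Fin 2 → ℝ) → ℝ) : Prop :=
  (∀ x, N x = 0 ↔ x = 0) ∧ (∀ (a : ℝ) (x), N (a • x) = |a| * N x) ∧
  (∀ x y, N (x + y) ≤ N x + N y)

/-- The geometric progression G(q) = {0, 1, 1+q, 1+q+q², …} ⊆ ℝ. -/
def geomProg (q : ℝ) : Set ℝ :=
  {x | x = 0 ∨ ∃ i : ℕ, 1 ≤ i ∧ x = (1 - q ^ i) / (1 - q)}

/-- `M'` is an `N`-isometric copy (in the plane) of the set of reals `M`: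
there is a bijection from `M` onto `M'` carrying absolute differences to `N`-distances. -/
def IsometricCopyOfReals (N : (Fin 2 → ℝ) → ℝ) (M : Set ℝ) (M' : Set (Fin 2 → ℝ)) : Prop :=
  ∃ f : ℝ → (Fin 2 → ℝ), Set.BijOn f M M' ∧ ∀ x ∈ M, ∀ y ∈ M, N (f x - f y) = |x - y|

/-- Perturbed points `zⁱ = (1 + q + ⋯ + q^{i−1})·x + tᵢ·w` with `|tᵢ| ≤ τ·qⁱ/2`, where
`‖x + t·w‖_N = 1` for all `|t| ≤ τ`, satisfy `‖zʲ − zⁱ‖_N = (qⁱ − qʲ)/(1−q)` for `i < j`,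
and they form an `N`-isometric copy of G(q). -/
theorem perturbed_geometric_copy (N : (Fin 2 → ℝ) → ℝ) (hN : IsNorm2 N)
    (x w : Fin 2 → ℝ) (τ : ℝ) (hτ : 0 < τ)
    (hxw : ∀ t : ℝ, |t| ≤ τ → N (x + t • w) = 1)
    (q : ℝ) (hq0 : 0 < q) (hq1 : q < 1)
    (t : ℕ → ℝ) (ht : ∀ i : ℕ, |t i| ≤ τ * q ^ i / 2)
    (z : ℕ → (Fin 2 → ℝ))
    (hz : ∀ i : ℕ, z i = (∑ l ∈ Finset.range i, q ^ l) • x + t i • w) :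
    (∀ i j : ℕ, i < j → N (z j - z i) = (q ^ i - q ^ j) / (1 - q)) ∧
      IsometricCopyOfReals N (geomProg q) (Set.range z) := by
  obtain ⟨hN0, hNs, hNt⟩ := hN
  have h1q : 0 < 1 - q := by linarith
  have hqne : (q : ℝ) ≠ 1 := by linarith
  have key : ∀ i j : ℕ, i < j → N (z j - z i) = (q ^ i - q ^ j) / (1 - q) := by
    intro i j hij
    set S : ℝ := ∑ l ∈ Finset.Ico i j, q ^ l with hS
    have hsplit : (∑ l ∈ Finset.range j, q ^ l) = (∑ l ∈ Finset.range i, q ^ l) + S := by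
      rw [hS, Finset.sum_Ico_eq_sub _ hij.le]; ring
    have hSval : S = (q ^ i - q ^ j) / (1 - q) := by
      have h1 := geom_sum_eq hqne i
      have h2 := geom_sum_eq hqne j
      have : S = (q ^ j - 1) / (q - 1) - (q ^ i - 1) / (q - 1) := by
        rw [← h1, ← h2]; linarith [hsplit]
      rw [this, div_sub_div_same, div_eq_div_iff (by linarith) (by linarith)]
      ring
    have hSgeq : q ^ i ≤ S := by
      refine Finset.single_le_sum (f := fun l => q ^ l) (fun l _ => by positivity) ?_
      simp [Finset.mem_Ico, hij]
    have hSpos : 0 < S := lt_of_lt_of_le (by positivity) hSgeq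
    have hzz : z j - z i = S • (x + ((t j - t i) / S) • w) := by
      funext k
      rw [hz i, hz j]
      simp only [Pi.sub_apply, Pi.add_apply, Pi.smul_apply, smul_eq_mul, hsplit]
      field_simp
      ring
    have hbound : |(t j - t i) / S| ≤ τ := by
      rw [abs_div, abs_of_pos hSpos, div_le_iff₀ hSpos]
      have h1 := ht i
      have h2 := ht j
      have h3 : |t j - t i| ≤ |t j| + |t i| := abs_sub _ _
      have h4 : q ^ j ≤ q ^ i := pow_le_pow_of_le_one hq0.le hq1.le hij.le
      nlinarith [abs_nonneg (t j - t i)]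
    rw [hzz, hNs, hxw _ hbound, abs_of_pos hSpos, mul_one, hSval]
  refine ⟨key, ?_⟩
  have hNzero : N 0 = 0 := (hN0 0).mpr rfl
  have hNneg : ∀ v, N (-v) = N v := by
    intro v
    have := hNs (-1) v
    simpa using this
  set g : ℕ → ℝ := fun i => (1 - q ^ i) / (1 - q) with hg
  have hgmono : StrictMono g := by
    intro i j hij
    have h := pow_lt_pow_right_of_lt_one₀ hq0 hq1 hij
    exact div_lt_div_of_pos_right (by linarith) h1q
  have hginj : Function.Injective g := hgmono.injective
  have hmem : ∀ r, r ∈ geomProg q ↔ ∃ i : ℕ, g i = r := by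
    intro r
    constructor
    · rintro (rfl | ⟨i, _, rfl⟩)
      · exact ⟨0, by simp [hg]⟩
      · exact ⟨i, rfl⟩
    · rintro ⟨i, rfl⟩
      rcases Nat.eq_zero_or_pos i with rfl | hi
      · exact Or.inl (by simp [hg])
      · exact Or.inr ⟨i, hi, rfl⟩
  classical
  set f : ℝ → (Fin 2 → ℝ) := fun r => if h : ∃ i : ℕ, g i = r then z h.choose else 0 with hf
  have hfg : ∀ i : ℕ, f (g i) = z i := by
    intro i
    have h : ∃ j : ℕ, g j = g i := ⟨i, rfl⟩
    have : h.choose = i := hginj h.choose_spec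
    simp [hf, dif_pos h, this]
  have hiso : ∀ a ∈ geomProg q, ∀ b ∈ geomProg q, N (f a - f b) = |a - b| := by
    intro a ha b hb
    obtain ⟨i, rfl⟩ := (hmem a).mp ha
    obtain ⟨j, rfl⟩ := (hmem b).mp hb
    rw [hfg, hfg]
    have hdiff : ∀ i j : ℕ, i < j → g j - g i = (q ^ i - q ^ j) / (1 - q) := by
      intro i j hij
      simp only [hg, div_sub_div_same]
      congr 1
      ring
    rcases lt_trichotomy i j with hij | rfl | hij
    · have h1 : z i - z j = -(z j - z i) := by ring
      rw [h1, hNneg, key i j hij, abs_of_neg (by linarith [hgmono hij]), ← hdiff i j hij]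
      ring
    · simp [hNzero]
    · rw [key j i hij, abs_of_pos (by linarith [hgmono hij]), hdiff j i hij]
  refine ⟨f, ⟨?_, ?_, ?_⟩, hiso⟩
  · intro r hr
    obtain ⟨i, rfl⟩ := (hmem r).mp hr
    rw [hfg]
    exact ⟨i, rfl⟩
  · intro a ha b hb hab
    have := hiso a ha b hb
    rw [hab, sub_self, hNzero] at this
    have := abs_eq_zero.mp this.symm
    linarith
  · rintro v ⟨i, rfl⟩
    refine ⟨g i, (hmem _).mpr ⟨i, rfl⟩, hfg i⟩
end
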